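/- Let {b(k), b*(k), c(k), c*(k) : k ∈ ℤ} be a locally annihilating bosonic Weyl system on a complex vector space W over S = {b, b*, c, c*} with pairing ⟨b,b*⟩ = ⟨c,c*⟩ = −1, ⟨b*,b⟩ = ⟨c*,c⟩ = 1, and all other pairings 0. Define X⁺(m) := √−1·(:bc*:)(m), X⁻(m) := √−1·(:b*c:)(m), and α(m) := (:bb*:)(m) − (:cc*:)(m). Then for all m, n ∈ ℤ: α(m)X⁺(n) − X⁺(n)α(m) = 2·X⁺(m+n) and α(m)X⁻(n) − X⁻(n)α(m) = −2·X⁻(m+n). (This is the mode form of the relation [α_i(z), x_i^±(w)] = ±(α_i,α_i) x_i^±(w) δ(z−w) with (α_i,α_i) = 2, verified in the proof of Theorem 3.5.) -/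

import Mathlib

noncomputable section

/-- A *bosonic Weyl system* over a set `S` of symbols with pairing `pair : S → S → ℂ`
on a complex vector space `W`: a family of operators `op u k` (`u ∈ S`, `k ∈ ℤ`)
such that `[op u k, op v l] = ⟨u,v⟩ δ_{k+l,0} id`. -/
def IsBosonicWeylSystem {S W : Type*} [AddCommGroup W] [Module ℂ W]
    (pair : S → S → ℂ) (op : S → ℤ → Module.End ℂ W) : Prop :=
  ∀ u v : S, ∀ k l : ℤ,
    op u k * op v l - op v l * op u k =
      if k + l = 0 then pair u v • (1 : Module.End ℂ W) else 0

/-- A family of operators is *locally annihilating* if for every vector `w` and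
every symbol `u`, `op u k w = 0` for all sufficiently large `k`. -/
def LocallyAnnihilating {S W : Type*} [AddCommGroup W] [Module ℂ W]
    (op : S → ℤ → Module.End ℂ W) : Prop :=
  ∀ (w : W) (u : S), ∃ K : ℤ, ∀ k : ℤ, K ≤ k → op u k w = 0

/-- The normally ordered quadratic mode
`(:uv:)(m) = Σ_{j<0} u(j)v(m-j) + Σ_{j≥0} v(m-j)u(j)` applied to a vector `w`;
on a locally annihilating system all but finitely many summands vanish, so the
`finsum` computes the intended (finite) sum. -/
def noMode {S W : Type*} [AddCommGroup W] [Module ℂ W]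
    (op : S → ℤ → Module.End ℂ W) (u v : S) (m : ℤ) (w : W) : W :=
  ∑ᶠ j : ℤ, if j < 0 then op u j (op v (m - j) w) else op v (m - j) (op u j w)

end

/-- The four symbols `b, b*, c, c*`. -/
inductive WSym4 : Type
  | b | bs | c | cs
deriving DecidableEq

/-- The pairing `⟨b,b*⟩ = ⟨c,c*⟩ = -1`, `⟨b*,b⟩ = ⟨c*,c⟩ = 1`, all other pairings `0`. -/
def pair4 : WSym4 → WSym4 → ℂ
  | .b, .bs => -1
  | .c, .cs => -1
  | .bs, .b => 1
  | .cs, .c => 1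
  | _, _ => 0

section
variable {W : Type*} [AddCommGroup W] [Module ℂ W] (op : WSym4 → ℤ → Module.End ℂ W)

/-- `X⁺(m) = √-1 (:bc*:)(m)` (applied to a vector). -/
noncomputable def Xplus (m : ℤ) (w : W) : W := Complex.I • noMode op .b .cs m w

/-- `X⁻(m) = √-1 (:b*c:)(m)` (applied to a vector). -/
noncomputable def Xminus (m : ℤ) (w : W) : W := Complex.I • noMode op .bs .c m w

/-- `α(m) = (:bb*:)(m) - (:cc*:)(m)` (applied to a vector). -/
noncomputable def alMode (m : ℤ) (w : W) : W := noMode op .b .bs m w - noMode op .c .cs m w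

end

/-!
The Weyl relations make `[u(k), ·]` act on a normally ordered quadratic mode as a derivation,
and in the sum defining `:xy:(n)` only the two contracted summands survive:
`[u(k), :xy:(n)] = ⟨u,x⟩ y(n+k) + ⟨u,y⟩ x(n+k)`. Hence `α(m)` shifts each generating mode,
`[α(m), u(k)] = q_u u(m+k)`, with charges `q_b = q_{c*} = 1` and `q_{b*} = q_c = -1`.
Since `b, c*` (and `b*, c`) commute, `:xy:(n)` is the plain convolution `Σ_j x(j) y(n-j)`, so the
Leibniz rule and the reindexing `j ↦ m + j` give `[α(m), :xy:(n)] = (q_x + q_y) :xy:(m+n)`.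
-/

open Function

theorem finsum_pi_single {ι M : Type*} [DecidableEq ι] [AddCommMonoid M] (i : ι) (x : M) :
    ∑ᶠ j, Pi.single i x j = x :=
  finsum_eq_single _ i (fun _ hj => by simp [hj]) |>.trans (by simp)

theorem hasFiniteSupport_pi_single {ι M : Type*} [DecidableEq ι] [AddCommMonoid M] (i : ι)
    (x : M) : (Pi.single i x).HasFiniteSupport :=
  (Set.finite_singleton i).subset Pi.support_single_subset

section WeylSystem

variable {S W : Type*} [AddCommGroup W] [Module ℂ W] {pair : S → S → ℂ}
  {op : S → ℤ → Module.End ℂ W}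

namespace IsBosonicWeylSystem

theorem apply_apply (hW : IsBosonicWeylSystem pair op) (u v : S) (k l : ℤ) (z : W) :
    op u k (op v l z) = op v l (op u k z) + if k + l = 0 then pair u v • z else 0 := by
  have h := congr($(hW u v k l) z)
  split_ifs at h ⊢ <;> simpa [sub_eq_iff_eq_add'] using h

theorem apply_comm (hW : IsBosonicWeylSystem pair op) {u v : S} (huv : pair u v = 0)
    (k l : ℤ) (z : W) : op u k (op v l z) = op v l (op u k z) := by
  rw [hW.apply_apply, huv, zero_smul, ite_self, add_zero]

theorem apply_apply_apply_sub (hW : IsBosonicWeylSystem pair op) (u x y : S) (k j l : ℤ)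
    (w : W) :
    op u k (op x j (op y l w)) - op x j (op y l (op u k w)) =
      (if k + j = 0 then pair u x • op y l w else 0) +
        (if k + l = 0 then pair u y • op x j w else 0) := by
  rw [hW.apply_apply u x, hW.apply_apply u y, map_add]
  split_ifs <;> simp only [map_smul, map_zero] <;> abel

end IsBosonicWeylSystem

def noModeTerm (op : S → ℤ → Module.End ℂ W) (u v : S) (m : ℤ) (w : W) (j : ℤ) : W :=
  if j < 0 then op u j (op v (m - j) w) else op v (m - j) (op u j w)

theorem noMode_eq_finsum (u v : S) (m : ℤ) (w : W) :
    noMode op u v m w = ∑ᶠ j, noModeTerm op u v m w j := rfl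

theorem IsBosonicWeylSystem.noModeTerm_eq (hW : IsBosonicWeylSystem pair op) {x y : S}
    (hxy : pair x y = 0) (m : ℤ) (w : W) :
    noModeTerm op x y m w = fun j => op x j (op y (m - j) w) := by
  ext j
  rw [noModeTerm, ite_eq_left_iff]
  exact fun _ => (hW.apply_comm hxy j (m - j) w).symm

namespace LocallyAnnihilating

theorem hasFiniteSupport_noModeTerm (hA : LocallyAnnihilating op) (u v : S) (m : ℤ) (w : W) :
    (noModeTerm op u v m w).HasFiniteSupport := by
  obtain ⟨K₁, hK₁⟩ := hA w u
  obtain ⟨K₂, hK₂⟩ := hA w v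
  refine (Set.finite_Ioo (min (m - K₂) (-1)) (max K₁ 0)).subset fun j hj => ?_
  rw [mem_support, noModeTerm] at hj
  split_ifs at hj with hneg
  · have : m - j < K₂ := by contrapose! hj; rw [hK₂ _ hj, map_zero]
    exact ⟨by omega, by omega⟩
  · have : j < K₁ := by contrapose! hj; rw [hK₁ _ hj, map_zero]
    exact ⟨by omega, by omega⟩

noncomputable def noModeLinear (hA : LocallyAnnihilating op) (u v : S) (m : ℤ) :
    Module.End ℂ W where
  toFun := noMode op u v m
  map_add' w₁ w₂ := by
    rw [noMode_eq_finsum, noMode_eq_finsum, noMode_eq_finsum, ← finsum_add_distrib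
      (hA.hasFiniteSupport_noModeTerm u v m w₁) (hA.hasFiniteSupport_noModeTerm u v m w₂)]
    refine finsum_congr fun j => ?_
    simp only [noModeTerm]
    split_ifs <;> simp only [map_add]
  map_smul' c w := by
    rw [noMode_eq_finsum, noMode_eq_finsum, RingHom.id_apply,
      smul_finsum' c (hA.hasFiniteSupport_noModeTerm u v m w)]
    refine finsum_congr fun j => ?_
    simp only [noModeTerm]
    split_ifs <;> simp only [map_smul]

end LocallyAnnihilating

theorem IsBosonicWeylSystem.op_noMode_sub (hW : IsBosonicWeylSystem pair op)
    (hA : LocallyAnnihilating op) (u x y : S) (k n : ℤ) (w : W) :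
    op u k (noMode op x y n w) - noMode op x y n (op u k w) =
      pair u x • op y (n + k) w + pair u y • op x (n + k) w := by
  have hterm : ∀ j, op u k (noModeTerm op x y n w j) - noModeTerm op x y n (op u k w) j =
      (Pi.single (-k) (pair u x • op y (n + k) w) : ℤ → W) j +
        (Pi.single (n + k) (pair u y • op x (n + k) w) : ℤ → W) j := by
    intro j
    have hleibniz : op u k (noModeTerm op x y n w j) - noModeTerm op x y n (op u k w) j =
        (if k + j = 0 then pair u x • op y (n - j) w else 0) +
          (if k + (n - j) = 0 then pair u y • op x j w else 0) := by
      by_cases hneg : j < 0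
      · simp only [noModeTerm, if_pos hneg]
        exact hW.apply_apply_apply_sub u x y k j (n - j) w
      · simp only [noModeTerm, if_neg hneg]
        rw [hW.apply_apply_apply_sub u y x k (n - j) j w, add_comm]
    rw [hleibniz]
    congr 1
    · rcases eq_or_ne j (-k) with rfl | hj
      · simp
      · simp [hj, show k + j ≠ 0 by omega]
    · rcases eq_or_ne j (n + k) with rfl | hj
      · simp
      · simp [hj, show k + (n - j) ≠ 0 by omega]
  rw [noMode_eq_finsum, noMode_eq_finsum, map_finsum (op u k)
    (hA.hasFiniteSupport_noModeTerm x y n w), ← finsum_sub_distrib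
    ((hA.hasFiniteSupport_noModeTerm x y n w).fun_comp (map_zero (op u k)))
    (hA.hasFiniteSupport_noModeTerm x y n (op u k w)), finsum_congr hterm,
    finsum_add_distrib (hasFiniteSupport_pi_single _ _) (hasFiniteSupport_pi_single _ _),
    finsum_pi_single, finsum_pi_single]

theorem map_apply_apply_sub_of_commutator_eq_smul (A : W →+ W) {x y : S} {m : ℤ} {cx cy : ℂ}
    (hx : ∀ k z, A (op x k z) - op x k (A z) = cx • op x (m + k) z)
    (hy : ∀ l z, A (op y l z) - op y l (A z) = cy • op y (m + l) z) (j l : ℤ) (w : W) :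
    A (op x j (op y l w)) - op x j (op y l (A w)) =
      cx • op x (m + j) (op y l w) + cy • op x j (op y (m + l) w) := by
  rw [sub_eq_iff_eq_add.mp (hx j _), sub_eq_iff_eq_add.mp (hy l w), map_add, map_smul]
  abel

theorem IsBosonicWeylSystem.map_noMode_sub_of_commutator_eq_smul
    (hW : IsBosonicWeylSystem pair op) (hA : LocallyAnnihilating op) (A : W →+ W)
    {x y : S} (hxy : pair x y = 0) {m : ℤ} {cx cy : ℂ}
    (hx : ∀ k z, A (op x k z) - op x k (A z) = cx • op x (m + k) z)
    (hy : ∀ l z, A (op y l z) - op y l (A z) = cy • op y (m + l) z) (n : ℤ) (w : W) :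
    A (noMode op x y n w) - noMode op x y n (A w) = (cx + cy) • noMode op x y (m + n) w := by
  have hsum : ∀ N z, noMode op x y N z = ∑ᶠ j, op x j (op y (N - j) z) := fun N z => by
    rw [noMode_eq_finsum, hW.noModeTerm_eq hxy]
  have hfin : ∀ N z, HasFiniteSupport fun j => op x j (op y (N - j) z) := fun N z => by
    simpa only [hW.noModeTerm_eq hxy] using hA.hasFiniteSupport_noModeTerm x y N z
  set G : ℤ → W := fun j => op x j (op y (m + n - j) w)
  have hterm : ∀ j, A (op x j (op y (n - j) w)) - op x j (op y (n - j) (A w)) =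
      cx • G (m + j) + cy • G j := fun j => by
    rw [map_apply_apply_sub_of_commutator_eq_smul A hx hy, show n - j = m + n - (m + j) by ring,
      show m + (m + n - (m + j)) = m + n - j by ring]
  have hGshift : HasFiniteSupport fun j => G (m + j) :=
    (hfin (m + n) w).comp_of_injective (add_right_injective m)
  have hshift : ∑ᶠ j, G (m + j) = ∑ᶠ j, G j := finsum_comp_equiv (Equiv.addLeft m)
  rw [hsum, hsum, hsum, map_finsum A (hfin n w), ← finsum_sub_distrib
    ((hfin n w).fun_comp (map_zero A)) (hfin n (A w)), finsum_congr hterm,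
    finsum_add_distrib (f := fun j => cx • G (m + j)) (g := fun j => cy • G j)
      (hGshift.smul_right _) ((hfin (m + n) w).smul_right _),
    ← smul_finsum' cx hGshift, ← smul_finsum' cy (hfin (m + n) w),
    hshift, ← add_smul]

end WeylSystem

def WSym4.charge : WSym4 → ℂ
  | .b => 1
  | .bs => -1
  | .c => -1
  | .cs => 1

section FourSymbols

variable {W : Type*} [AddCommGroup W] [Module ℂ W] {op : WSym4 → ℤ → Module.End ℂ W}

noncomputable def LocallyAnnihilating.alModeLinear (hA : LocallyAnnihilating op) (m : ℤ) :
    Module.End ℂ W :=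
  hA.noModeLinear .b .bs m - hA.noModeLinear .c .cs m

@[simp]
theorem LocallyAnnihilating.coe_alModeLinear (hA : LocallyAnnihilating op) (m : ℤ) :
    ⇑(hA.alModeLinear m) = alMode op m := rfl

theorem IsBosonicWeylSystem.alMode_op_sub (hW : IsBosonicWeylSystem pair4 op)
    (hA : LocallyAnnihilating op) (m : ℤ) (u : WSym4) (k : ℤ) (z : W) :
    alMode op m (op u k z) - op u k (alMode op m z) = u.charge • op u (m + k) z := by
  have hb := hW.op_noMode_sub hA u .b .bs k m z
  have hc := hW.op_noMode_sub hA u .c .cs k m z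
  rw [alMode, alMode, map_sub]
  cases u <;> simp only [pair4, WSym4.charge] at hb hc ⊢ <;>
    linear_combination (norm := module) -hb + hc

end FourSymbols

/-- for a locally annihilating bosonic Weyl system `{b, b*, c, c*}` as
above, `[α(m), X⁺(n)] = 2 X⁺(m+n)` and `[α(m), X⁻(n)] = -2 X⁻(m+n)` (mode form of
`[α_i(z), x_i^±(w)] = ±(α_i,α_i) x_i^±(w) δ(z-w)` with `(α_i,α_i) = 2`). -/
theorem alMode_Xpm_commutator {W : Type*} [AddCommGroup W] [Module ℂ W]
    (op : WSym4 → ℤ → Module.End ℂ W)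
    (hW : IsBosonicWeylSystem pair4 op) (hA : LocallyAnnihilating op)
    (m n : ℤ) (w : W) :
    alMode op m (Xplus op n w) - Xplus op n (alMode op m w) = (2 : ℂ) • Xplus op (m + n) w ∧
    alMode op m (Xminus op n w) - Xminus op n (alMode op m w) =
      (-2 : ℂ) • Xminus op (m + n) w := by
  have hα := hW.alMode_op_sub hA m
  have hquad : ∀ x y : WSym4, pair4 x y = 0 → ∀ n w,
      alMode op m (noMode op x y n w) - noMode op x y n (alMode op m w) =
        (x.charge + y.charge) • noMode op x y (m + n) w := fun _ _ hxy =>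
    hW.map_noMode_sub_of_commutator_eq_smul hA (hA.alModeLinear m).toAddMonoidHom hxy
      (hα _) (hα _)
  simp only [Xplus, Xminus, ← hA.coe_alModeLinear, map_smul, ← smul_sub]
  rw [hA.coe_alModeLinear, hquad .b .cs rfl, hquad .bs .c rfl, smul_comm, smul_comm Complex.I]
  norm_num [WSym4.charge]
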